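/- Let f : [a,b] → ℝ be continuous with two disjoint closed subintervals I, J ⊂ [a,b] satisfying f(I) ⊇ I ∪ J and f(J) ⊇ I ∪ J. Then for every n ≥ 1, f has a periodic point of period dividing n lying in I whose orbit realizes any prescribed periodic itinerary of period n over {I, J}; in particular f has fixed points in both I and J. -/
import Mathlib

open Set

/-- If a continuous map on `[u,v]` sends the endpoints to `r < s`, then some
subinterval maps *onto* exactly `[r,s]`. -/
lemma horseshoe_cover_aux {f : ℝ → ℝ} {u v r s : ℝ} (huv : u ≤ v) (hrs : r < s)
    (hf : ContinuousOn f (Set.Icc u v)) (hu : f u = r) (hv : f v = s) :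
    ∃ p' q', u ≤ p' ∧ p' ≤ q' ∧ q' ≤ v ∧ f '' Set.Icc p' q' = Set.Icc r s := by
  classical
  set A : Set ℝ := Icc u v ∩ f ⁻¹' {r} with hA
  have hAclosed : IsClosed A :=
    hf.preimage_isClosed_of_isClosed isClosed_Icc isClosed_singleton
  have hAne : A.Nonempty := ⟨u, ⟨le_refl u, huv⟩, by simp [hu]⟩
  have hAbdd : BddAbove A := ⟨v, fun x hx => hx.1.2⟩
  set p' := sSup A with hp'
  have hp'A : p' ∈ A := hAclosed.csSup_mem hAne hAbdd
  have hfp' : f p' = r := hp'A.2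
  have hup' : u ≤ p' := hp'A.1.1
  have hp'v : p' ≤ v := hp'A.1.2
  set B : Set ℝ := Icc p' v ∩ f ⁻¹' {s} with hB
  have hfB : ContinuousOn f (Icc p' v) := hf.mono (Icc_subset_Icc hup' le_rfl)
  have hBclosed : IsClosed B :=
    hfB.preimage_isClosed_of_isClosed isClosed_Icc isClosed_singleton
  have hBne : B.Nonempty := ⟨v, ⟨hp'v, le_rfl⟩, by simp [hv]⟩
  have hBbdd : BddBelow B := ⟨p', fun x hx => hx.1.1⟩
  set q' := sInf B with hq'
  have hq'B : q' ∈ B := hBclosed.csInf_mem hBne hBbdd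
  have hfq' : f q' = s := hq'B.2
  have hp'q' : p' ≤ q' := hq'B.1.1
  have hq'v : q' ≤ v := hq'B.1.2
  refine ⟨p', q', hup', hp'q', hq'v, ?_⟩
  have hsubIcc : Icc p' q' ⊆ Icc u v := Icc_subset_Icc hup' hq'v
  have hfc : ContinuousOn f (Icc p' q') := hf.mono hsubIcc
  apply Set.Subset.antisymm
  · rintro y ⟨x, hx, rfl⟩
    constructor
    · by_contra h
      push_neg at h
      have hsub2 : Icc x q' ⊆ Icc p' q' := Icc_subset_Icc hx.1 le_rfl
      have hiv := intermediate_value_Icc hx.2 (hfc.mono hsub2)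
      have hrmem : r ∈ Icc (f x) (f q') := ⟨le_of_lt h, by rw [hfq']; exact le_of_lt hrs⟩
      obtain ⟨y, hy, hfy⟩ := hiv hrmem
      have hyA : y ∈ A :=
        ⟨⟨le_trans hup' (le_trans hx.1 hy.1), le_trans hy.2 hq'v⟩, by simp [hfy]⟩
      have hyp : y ≤ p' := le_csSup hAbdd hyA
      have hyx : y = x := le_antisymm (hyp.trans hx.1) hy.1
      rw [hyx] at hfy
      linarith
    · by_contra h
      push_neg at h
      have hsub2 : Icc p' x ⊆ Icc p' q' := Icc_subset_Icc le_rfl hx.2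
      have hiv := intermediate_value_Icc hx.1 (hfc.mono hsub2)
      have hsmem : s ∈ Icc (f p') (f x) := ⟨by rw [hfp']; exact le_of_lt hrs, le_of_lt h⟩
      obtain ⟨y, hy, hfy⟩ := hiv hsmem
      have hyB : y ∈ B := ⟨⟨hy.1, le_trans (hy.2.trans hx.2) hq'v⟩, by simp [hfy]⟩
      have hyq : q' ≤ y := csInf_le hBbdd hyB
      have hyx : y = x := le_antisymm hy.2 (hx.2.trans hyq)
      rw [hyx] at hfy
      linarith
  · have hiv := intermediate_value_Icc hp'q' hfc
    rw [hfp', hfq'] at hiv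
    exact hiv

/-- Covering lemma: if `[r,s] ⊆ f([p,q])` then some subinterval of `[p,q]`
maps onto exactly `[r,s]`. -/
lemma horseshoe_cover {f : ℝ → ℝ} {p q r s : ℝ} (hrs : r ≤ s)
    (hf : ContinuousOn f (Set.Icc p q)) (hsub : Set.Icc r s ⊆ f '' Set.Icc p q) :
    ∃ p' q', p ≤ p' ∧ p' ≤ q' ∧ q' ≤ q ∧ f '' Set.Icc p' q' = Set.Icc r s := by
  obtain ⟨u, hu, hfu⟩ := hsub (left_mem_Icc.mpr hrs)
  obtain ⟨v, hv, hfv⟩ := hsub (right_mem_Icc.mpr hrs)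
  rcases eq_or_lt_of_le hrs with heq | hlt
  · refine ⟨u, u, hu.1, le_rfl, hu.2, ?_⟩
    rw [Set.Icc_self, Set.image_singleton, hfu, ← heq, Set.Icc_self]
  · rcases le_total u v with huv | hvu
    · obtain ⟨p', q', h1, h2, h3, h4⟩ :=
        horseshoe_cover_aux huv hlt (hf.mono (Icc_subset_Icc hu.1 hv.2)) hfu hfv
      exact ⟨p', q', le_trans hu.1 h1, h2, le_trans h3 hv.2, h4⟩
    · set gg : ℝ → ℝ := fun x => f (-x) with hgg
      have hmaps : Set.MapsTo (fun x : ℝ => -x) (Icc (-u) (-v)) (Icc p q) := by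
        intro x hx
        constructor
        · have := hx.2; have := hv.1; simp only [mem_Icc] at *; linarith
        · have := hx.1; have := hu.2; simp only [mem_Icc] at *; linarith
      have hg : ContinuousOn gg (Icc (-u) (-v)) :=
        hf.comp continuousOn_neg hmaps
      obtain ⟨p', q', h1, h2, h3, h4⟩ :=
        horseshoe_cover_aux (neg_le_neg hvu) hlt hg (by simp [hgg, hfu]) (by simp [hgg, hfv])
      refine ⟨-q', -p', ?_, by linarith, ?_, ?_⟩
      · have : q' ≤ -v := h3
        have := hv.1
        linarith
      · have : -u ≤ p' := h1
        have := hu.2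
        linarith
      · have himg : (fun x : ℝ => -x) '' Icc p' q' = Icc (-q') (-p') := by
          ext x
          simp only [Set.mem_image, Set.mem_Icc]
          constructor
          · rintro ⟨y, hy, rfl⟩; exact ⟨by linarith [hy.2], by linarith [hy.1]⟩
          · intro hx; exact ⟨-x, ⟨by linarith [hx.2], by linarith [hx.1]⟩, by ring⟩
        calc f '' Icc (-q') (-p') = f '' ((fun x : ℝ => -x) '' Icc p' q') := by rw [himg]
          _ = gg '' Icc p' q' := by rw [← Set.image_comp]; rfl
          _ = Icc r s := h4

/-- A continuous self-covering interval map has a fixed point. -/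
lemma horseshoe_fix {gg : ℝ → ℝ} {p q : ℝ} (hpq : p ≤ q)
    (hg : ContinuousOn gg (Set.Icc p q)) (hcov : Set.Icc p q ⊆ gg '' Set.Icc p q) :
    ∃ x ∈ Set.Icc p q, gg x = x := by
  obtain ⟨u, hu, hfu⟩ := hcov (left_mem_Icc.mpr hpq)
  obtain ⟨v, hv, hfv⟩ := hcov (right_mem_Icc.mpr hpq)
  have hsub : uIcc u v ⊆ Icc p q := uIcc_subset_Icc hu hv
  have hh : ContinuousOn (fun x => gg x - x) (uIcc u v) :=
    (hg.mono hsub).sub continuousOn_id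
  have hiv := intermediate_value_uIcc hh
  have h0 : (0 : ℝ) ∈ uIcc (gg u - u) (gg v - v) := by
    rw [Set.mem_uIcc]
    left
    constructor
    · rw [hfu]; linarith [hu.1]
    · rw [hfv]; linarith [hv.2]
  obtain ⟨x, hx, hfx⟩ := hiv h0
  refine ⟨x, hsub hx, by linarith [sub_eq_zero.mp hfx]⟩

/-- Horseshoe covering relations for interval maps force periodic orbits
realizing every prescribed periodic itinerary over {I, J}; in particular there
are fixed points in both I and J. -/
theorem stmt14 (a b c d e g : ℝ) (f : ℝ → ℝ) (I J : Set ℝ)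
    (hf : ContinuousOn f (Set.Icc a b))
    (hI : I = Set.Icc c d) (hJ : J = Set.Icc e g) (hcd : c ≤ d) (heg : e ≤ g)
    (hIsub : I ⊆ Set.Icc a b) (hJsub : J ⊆ Set.Icc a b)
    (hdisj : Disjoint I J)
    (hcovI : I ∪ J ⊆ f '' I) (hcovJ : I ∪ J ⊆ f '' J) :
    (∀ n : ℕ, 1 ≤ n → ∀ w : Fin n → Set ℝ, (∀ k, w k = I ∨ w k = J) →
      ∃ x, f^[n] x = x ∧ ∀ k : Fin n, f^[(k : ℕ)] x ∈ w k) ∧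
    (∃ x ∈ I, f x = x) ∧ (∃ x ∈ J, f x = x) := by
  classical
  have hIval : ∀ S : Set ℝ, S = I ∨ S = J →
      ∃ pS qS, pS ≤ qS ∧ S = Set.Icc pS qS ∧ S ⊆ Set.Icc a b := by
    rintro S (rfl | rfl)
    · exact ⟨c, d, hcd, hI, hIsub⟩
    · exact ⟨e, g, heg, hJ, hJsub⟩
  have hcovS : ∀ S : Set ℝ, S = I ∨ S = J → ∀ T : Set ℝ, T = I ∨ T = J → T ⊆ f '' S := by
    rintro S (rfl | rfl) T hT
    · rcases hT with rfl | rfl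
      · exact fun x hx => hcovI (Or.inl hx)
      · exact fun x hx => hcovI (Or.inr hx)
    · rcases hT with rfl | rfl
      · exact fun x hx => hcovJ (Or.inl hx)
      · exact fun x hx => hcovJ (Or.inr hx)
  have main : ∀ n : ℕ, 1 ≤ n → ∀ w : Fin n → Set ℝ, (∀ k, w k = I ∨ w k = J) →
      ∃ x, f^[n] x = x ∧ ∀ k : Fin n, f^[(k : ℕ)] x ∈ w k := by
    intro n hn w hw
    set w' : ℕ → Set ℝ := fun k => if h : k < n then w ⟨k, h⟩ else w ⟨0, hn⟩ with hw'def
    have hw'IJ : ∀ k, w' k = I ∨ w' k = J := by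
      intro k
      simp only [hw'def]
      split <;> apply hw
    have hw'n : w' n = w' 0 := by
      simp only [hw'def]
      rw [dif_neg (lt_irrefl n)]
      split <;> rfl
    -- main downward induction building nested intervals
    have key : ∀ j, j ≤ n → ∃ p q, p ≤ q ∧ Set.Icc p q ⊆ w' (n - j) ∧
        (∀ i, i ≤ j → f^[i] '' Set.Icc p q ⊆ w' (n - j + i)) ∧
        f^[j] '' Set.Icc p q = w' 0 := by
      intro j
      induction j with
      | zero =>
        intro _
        obtain ⟨pS, qS, h1, h2, _⟩ := hIval (w' n) (hw'IJ n)
        refine ⟨pS, qS, h1, ?_, ?_, ?_⟩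
        · rw [Nat.sub_zero, h2]
        · intro i hi
          interval_cases i
          simp only [Function.iterate_zero, Set.image_id]
          rw [Nat.sub_zero, Nat.add_zero, h2]
        · simp only [Function.iterate_zero, Set.image_id]
          rw [← hw'n, h2]
      | succ j ih =>
        intro hjn
        obtain ⟨p, q, hpq, hsubw, himgs, hfin⟩ := ih (Nat.le_of_succ_le hjn)
        obtain ⟨pS, qS, h1, h2, h3⟩ := hIval (w' (n - (j + 1))) (hw'IJ (n - (j + 1)))
        have hcont : ContinuousOn f (Set.Icc pS qS) := by
          rw [← h2]; exact hf.mono h3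
        have hcover : Set.Icc p q ⊆ f '' Set.Icc pS qS := by
          rw [← h2]
          exact subset_trans hsubw (hcovS _ (hw'IJ _) _ (hw'IJ _))
        obtain ⟨p₁, q₁, hA, hB, hC, hD⟩ := horseshoe_cover hpq hcont hcover
        have harith : n - (j + 1) + 1 = n - j := by omega
        refine ⟨p₁, q₁, hB, ?_, ?_, ?_⟩
        · rw [h2]; exact Set.Icc_subset_Icc hA hC
        · intro i hi
          rcases Nat.eq_zero_or_eq_succ_pred i with rfl | hieq
          · simp only [Function.iterate_zero, Set.image_id, Nat.add_zero]
            rw [h2]; exact Set.Icc_subset_Icc hA hC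
          · obtain ⟨i', rfl⟩ : ∃ i', i = i' + 1 := ⟨i - 1, hieq⟩
            have hstep : f^[i' + 1] '' Set.Icc p₁ q₁ = f^[i'] '' (f '' Set.Icc p₁ q₁) := by
              rw [Function.iterate_succ, Set.image_comp]
            rw [hstep, hD]
            have : n - (j + 1) + (i' + 1) = n - j + i' := by omega
            rw [this]
            exact himgs i' (by omega)
        · have hstep : f^[j + 1] '' Set.Icc p₁ q₁ = f^[j] '' (f '' Set.Icc p₁ q₁) := by
            rw [Function.iterate_succ, Set.image_comp]
          rw [hstep, hD, hfin]
    obtain ⟨p, q, hpq, hsubw0, himgs, hfn⟩ := key n le_rfl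
    rw [Nat.sub_self] at hsubw0 himgs
    simp only [Nat.zero_add] at himgs
    -- continuity of iterates on [p,q]
    have hcontIter : ∀ i, i ≤ n → ContinuousOn f^[i] (Set.Icc p q) := by
      intro i
      induction i with
      | zero => intro _; simpa using continuousOn_id
      | succ i ih =>
        intro hin
        have hi : i ≤ n := Nat.le_of_succ_le hin
        have hmaps : Set.MapsTo f^[i] (Set.Icc p q) (Set.Icc a b) := by
          intro x hx
          have hx' : f^[i] x ∈ w' i := himgs i hi ⟨x, hx, rfl⟩
          obtain ⟨_, _, _, _, h3⟩ := hIval (w' i) (hw'IJ i)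
          exact h3 hx'
        rw [Function.iterate_succ']
        exact hf.comp (ih hi) hmaps
    have hcov0 : Set.Icc p q ⊆ f^[n] '' Set.Icc p q := by
      rw [hfn]; exact hsubw0
    obtain ⟨x, hxmem, hxfix⟩ := horseshoe_fix hpq (hcontIter n le_rfl) hcov0
    refine ⟨x, hxfix, ?_⟩
    intro k
    have hk : (k : ℕ) < n := k.isLt
    have : f^[(k : ℕ)] x ∈ w' (k : ℕ) := himgs (k : ℕ) (le_of_lt hk) ⟨x, hxmem, rfl⟩
    simpa only [hw'def, dif_pos hk, Fin.eta] using this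
  refine ⟨main, ?_, ?_⟩
  · obtain ⟨x, hx1, hx2⟩ := main 1 le_rfl (fun _ => I) (fun _ => Or.inl rfl)
    exact ⟨x, by simpa using hx2 0, by simpa using hx1⟩
  · obtain ⟨x, hx1, hx2⟩ := main 1 le_rfl (fun _ => J) (fun _ => Or.inr rfl)
    exact ⟨x, by simpa using hx2 0, by simpa using hx1⟩
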